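/- arXiv:1301.4888 — 6 statements merged into one kernel-verified Lean document; each statement's English description precedes it below -/
import Mathlib

section
/- For a prime p ≥ 5 and integer m ≥ 1, the binomial coefficient C(mp + p - 1, p - 1) is congruent to 1 modulo p^3. -/
open Finset

/-- sum of squares formula -/
lemma sumsq (n : ℕ) : 6 * ∑ i ∈ range (n+1), i^2 = (n+1)*n*(2*n+1) := by
  induction n with
  | zero => simp
  | succ n ih =>
    rw [Finset.sum_range_succ, Nat.mul_add, ih]
    ring

/-- first-order expansion of a product when a² = 0 -/
lemma prod_add_nilsq {R : Type*} [CommRing R] (a : R) (ha : a * a = 0)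
    (s : Finset ℕ) (g : ℕ → R) :
    ∏ i ∈ s, (a + g i) = ∏ i ∈ s, g i + a * ∑ i ∈ s, ∏ j ∈ s.erase i, g j := by
  classical
  induction s using Finset.induction with
  | empty => simp
  | @insert x s hx ih =>
    rw [Finset.prod_insert hx, ih, Finset.prod_insert hx, Finset.sum_insert hx,
      Finset.erase_insert hx]
    have hsum : ∑ i ∈ s, ∏ j ∈ (insert x s).erase i, g j
        = ∑ i ∈ s, g x * ∏ j ∈ s.erase i, g j := by
      refine Finset.sum_congr rfl fun i hi => ?_
      rw [Finset.erase_insert_of_ne (by rintro rfl; exact hx hi),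
        Finset.prod_insert (fun hc => hx (Finset.mem_of_mem_erase hc))]
    rw [hsum, ← Finset.mul_sum]
    linear_combination (∑ i ∈ s, ∏ j ∈ s.erase i, g j) * ha

lemma factorial_mul_choose_eq (p h m : ℕ) (hp2 : p = 2*h+1) :
    (p-1).factorial * Nat.choose (m*p+p-1) (p-1)
      = ∏ i ∈ range h, ((m^2+m)*p^2 + (i+1)*(2*h-i)) := by
  rw [← Nat.descFactorial_eq_factorial_mul_choose,
    Nat.descFactorial_eq_prod_range]
  have h2 : ∏ i ∈ range (p-1), (m*p+p-1-i) = ∏ i ∈ range (p-1), (m*p+1+i) := by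
    rw [← Finset.prod_range_reflect (fun i => m*p+1+i) (p-1)]
    refine Finset.prod_congr rfl fun i hi => ?_
    simp only [Finset.mem_range] at hi
    omega
  rw [h2, show p - 1 = h + h by omega, Finset.prod_range_add,
    ← Finset.prod_range_reflect (fun i => m*p+1+(h+i)) h, ← Finset.prod_mul_distrib]
  refine Finset.prod_congr rfl fun i hi => ?_
  simp only [Finset.mem_range] at hi
  obtain ⟨j, hj⟩ : ∃ j, h = i + 1 + j := ⟨h - i - 1, by omega⟩
  rw [show h - 1 - i = j by omega, show 2*h - i = i + 2*j + 2 by omega]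
  subst hj; subst hp2; ring

lemma sum_inv_sq_range (p : ℕ) (hp : p.Prime) (hp5 : 5 ≤ p) :
    ∑ k ∈ range p, ((((k : ZMod p))^2)⁻¹ : ZMod p) = 0 := by
  haveI := Fact.mk hp
  haveI : NeZero p := ⟨hp.ne_zero⟩
  have h2 : ∀ f : ZMod p → ZMod p, ∑ k ∈ range p, f (k : ZMod p) = ∑ x : ZMod p, f x := by
    intro f
    refine Finset.sum_nbij' (fun k => (k : ZMod p)) (fun x => x.val) ?_ ?_ ?_ ?_ ?_
    · intro a _; exact Finset.mem_univ _
    · intro x _; simpa [Finset.mem_range] using ZMod.val_lt x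
    · intro a ha; simp only [Finset.mem_range] at ha; exact ZMod.val_cast_of_lt ha
    · intro x _; exact ZMod.natCast_rightInverse x
    · intro a _; rfl
  have h1 : ∑ x : ZMod p, ((x^2)⁻¹ : ZMod p) = ∑ x : ZMod p, x^2 := by
    refine (Fintype.sum_bijective (fun x : ZMod p => x⁻¹)
      inv_involutive.bijective _ _ fun x => ?_).symm
    rw [inv_pow, inv_inv]
  have h4 : 6 * ∑ k ∈ range p, k^2 = p * ((p-1) * (2*(p-1)+1)) := by
    have := sumsq (p-1)
    rw [show p-1+1 = p by omega] at this
    rw [this]; ring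
  have h3 : ((6 : ℕ) : ZMod p) * ∑ k ∈ range p, ((k : ZMod p))^2 = 0 := by
    have hc : ∑ k ∈ range p, ((k : ZMod p))^2 = ((∑ k ∈ range p, k^2 : ℕ) : ZMod p) := by
      push_cast; ring
    rw [hc, ← Nat.cast_mul, h4]
    simp
  have h6 : ((6:ℕ) : ZMod p) ≠ 0 := by
    rw [Ne, ZMod.natCast_eq_zero_iff]
    intro hdvd
    rcases (Nat.Prime.dvd_mul hp).mp (show p ∣ 2*3 by norm_num at hdvd ⊢; exact hdvd)
      with hd | hd <;> exact absurd (Nat.le_of_dvd (by norm_num) hd) (by omega)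
  rw [h2 (fun x => (x^2)⁻¹), h1, ← h2 (fun x => x^2)]
  exact (mul_eq_zero.mp h3).resolve_left h6

lemma cast_sub_eq_neg (p h i : ℕ) (hp2 : p = 2*h+1) (hi : i < h) :
    ((2*h - i : ℕ) : ZMod p) = -(((i+1 : ℕ) : ZMod p)) := by
  have key : ((2*h - i) + (i+1) : ℕ) = p := by omega
  have h0 : (((2*h-i) + (i+1) : ℕ) : ZMod p) = 0 := by rw [key]; exact ZMod.natCast_self p
  rw [Nat.cast_add] at h0
  exact eq_neg_of_add_eq_zero_left h0

lemma sum_inv_sq_half (p h : ℕ) (hp : p.Prime) (hp5 : 5 ≤ p) (hp2 : p = 2*h+1) :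
    ∑ i ∈ range h, ((((i+1 : ℕ) : ZMod p))^2)⁻¹ = 0 := by
  haveI := Fact.mk hp
  set G : ℕ → ZMod p := fun k => (((k : ℕ) : ZMod p)^2)⁻¹ with hG
  have full : ∑ k ∈ range p, G k = 0 := sum_inv_sq_range p hp hp5
  rw [show range p = range (2*h+1) by rw [← hp2], Finset.sum_range_succ'] at full
  have hG0 : G 0 = 0 := by simp [hG]
  rw [hG0, add_zero, show 2*h = h + h by ring, Finset.sum_range_add] at full
  have hrefl : ∑ i ∈ range h, G (h + i + 1) = ∑ i ∈ range h, G (i+1) := by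
    rw [← Finset.sum_range_reflect (fun i => G (h + i + 1)) h]
    refine Finset.sum_congr rfl fun i hi => ?_
    simp only [Finset.mem_range] at hi
    rw [show h + (h - 1 - i) + 1 = 2*h - i by omega]
    show ((((2*h - i : ℕ)) : ZMod p)^2)⁻¹ = ((((i+1 : ℕ)) : ZMod p)^2)⁻¹
    rw [cast_sub_eq_neg p h i hp2 hi, neg_sq]
  rw [hrefl] at full
  have h2 : ((2:ℕ) : ZMod p) ≠ 0 := by
    rw [Ne, ZMod.natCast_eq_zero_iff]
    intro hd
    exact absurd (Nat.le_of_dvd (by norm_num) hd) (by omega)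
  have : ((2:ℕ) : ZMod p) * ∑ i ∈ range h, G (i+1) = 0 := by
    push_cast
    linear_combination full
  exact (mul_eq_zero.mp this).resolve_left h2

lemma p_dvd_T (p h : ℕ) (hp : p.Prime) (hp5 : 5 ≤ p) (hp2 : p = 2*h+1) :
    p ∣ ∑ i ∈ range h, ∏ j ∈ (range h).erase i, ((j+1)*(2*h-j)) := by
  haveI := Fact.mk hp
  rw [← ZMod.natCast_eq_zero_iff]
  push_cast
  set u : ℕ → ZMod p := fun j => ((j+1 : ℕ) : ZMod p) with hu
  have hune : ∀ i ∈ range h, u i ≠ 0 := by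
    intro i hi
    simp only [Finset.mem_range] at hi
    simp only [hu, Ne, ZMod.natCast_eq_zero_iff]
    intro hd
    exact absurd (Nat.le_of_dvd (by omega) hd) (by omega)
  have step : ∀ i ∈ range h, ∏ j ∈ (range h).erase i, (((j:ℕ) : ZMod p) + 1) * ((2*h-j : ℕ) : ZMod p)
      = (-1)^(h-1) * ((∏ j ∈ range h, (u j)^2) * ((u i)^2)⁻¹) := by
    intro i hi
    have e1 : ∏ j ∈ (range h).erase i, ((((j:ℕ)) : ZMod p) + 1) * ((2*h-j : ℕ) : ZMod p)
        = ∏ j ∈ (range h).erase i, ((-1) * (u j)^2) := by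
      refine Finset.prod_congr rfl fun j hj => ?_
      have hjlt : j < h := Finset.mem_range.mp (Finset.mem_of_mem_erase hj)
      rw [cast_sub_eq_neg p h j hp2 hjlt]
      simp only [hu]; push_cast; ring
    rw [e1, Finset.prod_mul_distrib, Finset.prod_const,
      Finset.card_erase_of_mem hi, Finset.card_range]
    congr 1
    rw [eq_mul_inv_iff_mul_eq₀ (pow_ne_zero 2 (hune i hi))]
    exact Finset.prod_erase_mul _ _ hi
  rw [Finset.sum_congr rfl step, ← Finset.mul_sum, ← Finset.mul_sum]
  rw [show ∑ i ∈ range h, ((u i)^2)⁻¹ = 0 from sum_inv_sq_half p h hp hp5 hp2]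
  ring

theorem glaisher_congruence (p m : ℕ) (hp : p.Prime) (hp5 : 5 ≤ p) (hm : 1 ≤ m) :
    Nat.choose (m * p + p - 1) (p - 1) ≡ 1 [MOD p ^ 3] := by
  obtain ⟨h, hp2⟩ := hp.odd_of_ne_two (by omega)
  have key := factorial_mul_choose_eq p h m hp2
  have key0 := factorial_mul_choose_eq p h 0 hp2
  simp only [Nat.zero_mul, Nat.zero_add, Nat.choose_self, Nat.mul_one, ne_eq,
    OfNat.ofNat_ne_zero, not_false_eq_true, zero_pow, Nat.zero_add, Nat.pow_zero] at key0
  -- key0 : (p-1)! = ∏ i ∈ range h, (i+1)*(2*h-i)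
  set c := m^2 + m with hc
  have hcast : ((((p-1).factorial * Nat.choose (m*p+p-1) (p-1) : ℕ)) : ZMod (p^3))
      = ((((p-1).factorial * 1 : ℕ)) : ZMod (p^3)) := by
    rw [Nat.mul_one, key]
    conv_rhs => rw [key0]
    rw [Nat.cast_prod, Nat.cast_prod]
    have hexp : ∀ i ∈ range h, ((c*p^2 + (i+1)*(2*h-i) : ℕ) : ZMod (p^3))
        = ((c*p^2 : ℕ) : ZMod (p^3)) + (((i+1)*(2*h-i) : ℕ) : ZMod (p^3)) := by
      intro i _; push_cast; ring
    rw [Finset.prod_congr rfl hexp]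
    have ha : ((c*p^2 : ℕ) : ZMod (p^3)) * ((c*p^2 : ℕ) : ZMod (p^3)) = 0 := by
      rw [← Nat.cast_mul, ZMod.natCast_eq_zero_iff]
      exact ⟨c^2*p, by ring⟩
    rw [prod_add_nilsq _ ha (range h) (fun i => (((i+1)*(2*h-i) : ℕ) : ZMod (p^3)))]
    have hT : ∑ i ∈ range h, ∏ j ∈ (range h).erase i, (((j+1)*(2*h-j) : ℕ) : ZMod (p^3))
        = ((∑ i ∈ range h, ∏ j ∈ (range h).erase i, ((j+1)*(2*h-j)) : ℕ) : ZMod (p^3)) := by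
      rw [Nat.cast_sum]
      exact Finset.sum_congr rfl fun i _ => (Nat.cast_prod _ _).symm
    rw [hT, ← Nat.cast_mul]
    obtain ⟨t, ht⟩ := p_dvd_T p h hp hp5 hp2
    have hz : ((c*p^2 * (∑ i ∈ range h, ∏ j ∈ (range h).erase i, ((j+1)*(2*h-j))) : ℕ)
        : ZMod (p^3)) = 0 := by
      rw [ZMod.natCast_eq_zero_iff, ht]
      exact ⟨c*t, by ring⟩
    rw [hz, add_zero]
  have hmod : (p-1).factorial * Nat.choose (m*p+p-1) (p-1)
      ≡ (p-1).factorial * 1 [MOD p^3] := (ZMod.natCast_eq_natCast_iff _ _ _).mp hcast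
  have hco : Nat.Coprime p ((p-1).factorial) :=
    (Nat.Prime.coprime_iff_not_dvd hp).mpr (by rw [hp.dvd_factorial]; omega)
  exact Nat.ModEq.cancel_left_of_coprime (hco.pow_left 3) hmod
end

section
/- For a prime p ≥ 5 and integer m ≥ 1, the product (mp+1)(mp+2)⋯(mp+p-1) is congruent to (p-1)! modulo p^3. -/
open Finset

/-- Pairing a product over `Icc 1 (2h)` into `h` pairs `(j, 2h+1-j)`. -/
lemma glaisher_prod_pair {M : Type*} [CommMonoid M] (h : ℕ) (f : ℕ → M) :
    ∏ j ∈ Finset.Icc 1 (2 * h), f j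
      = ∏ j ∈ Finset.Icc 1 h, (f j * f (2 * h + 1 - j)) := by
  have hIcc : ∀ n : ℕ, Finset.Icc 1 n = Finset.Ioc 0 n := fun n => rfl
  rw [hIcc, hIcc, Finset.prod_mul_distrib,
    ← Finset.prod_Ioc_consecutive f (Nat.zero_le h) (by omega : h ≤ 2 * h)]
  congr 1
  refine Finset.prod_nbij' (fun j => 2 * h + 1 - j) (fun j => 2 * h + 1 - j) ?_ ?_ ?_ ?_ ?_ <;>
      intro a ha <;> simp only [Finset.mem_Ioc] at ha ⊢
  · omega
  · omega
  · omega
  · omega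
  · congr 1; omega

/-- Expansion of a product of `b i + C` where `C * C = 0`. -/
lemma glaisher_prod_add {R : Type*} [CommRing R] {ι : Type*} [DecidableEq ι] (s : Finset ι)
    (b : ι → R) (C : R) (hC : C * C = 0) :
    ∏ i ∈ s, (b i + C) = ∏ i ∈ s, b i + C * ∑ j ∈ s, ∏ i ∈ s.erase j, b i := by
  induction s using Finset.induction_on with
  | empty => simp
  | @insert a s ha ih =>
    have hsum : ∑ j ∈ s, ∏ i ∈ (insert a s).erase j, b i
        = ∑ j ∈ s, b a * ∏ i ∈ s.erase j, b i := by
      refine Finset.sum_congr rfl fun j hj => ?_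
      rw [Finset.erase_insert_of_ne (by rintro rfl; exact ha hj),
        Finset.prod_insert (fun hmem => ha (Finset.mem_of_mem_erase hmem))]
    rw [Finset.prod_insert ha, Finset.prod_insert ha, ih, Finset.sum_insert ha,
      Finset.erase_insert ha, hsum, ← Finset.mul_sum]
    ring_nf
    linear_combination (∑ j ∈ s, ∏ i ∈ s.erase j, b i) * hC

lemma glaisher_sum_inv_sq (p h : ℕ) (hp : p.Prime) (hph : p = 2 * h + 1) (hp5 : 5 ≤ p) :
    ∑ j ∈ Finset.Icc 1 h, (((j : ZMod p)) ^ 2)⁻¹ = 0 := by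
  haveI : Fact p.Prime := ⟨hp⟩
  set F := ZMod p
  -- the full sum over Icc 1 (2h) is zero
  have hfull : ∑ j ∈ Finset.Icc 1 (2 * h), (((j : F)) ^ 2)⁻¹ = 0 := by
    have huniv : ∑ x : F, (x ^ 2)⁻¹ = 0 := by
      have hbij : Function.Bijective (fun x : F => x⁻¹) :=
        Function.Involutive.bijective (fun x => inv_inv x)
      calc ∑ x : F, (x ^ 2)⁻¹ = ∑ x : F, (x⁻¹) ^ 2 := by
            refine Finset.sum_congr rfl fun x _ => ?_
            rw [inv_pow]
          _ = ∑ x : F, x ^ 2 := hbij.sum_comp (fun x => x ^ 2)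
          _ = 0 := by
            apply FiniteField.sum_pow_lt_card_sub_one
            rw [ZMod.card]
            omega
    have hrange : ∑ x : F, (x ^ 2)⁻¹ = ∑ j ∈ Finset.range p, (((j : F)) ^ 2)⁻¹ := by
      refine Finset.sum_nbij' (fun x : F => x.val) (fun j : ℕ => (j : F)) ?_ ?_ ?_ ?_ ?_
      · intro x _
        simp [ZMod.val_lt]
      · intro j _
        exact Finset.mem_univ _
      · intro x _
        exact ZMod.natCast_zmod_val x
      · intro j hj
        exact ZMod.val_natCast_of_lt (Finset.mem_range.mp hj)
      · intro x _
        rw [ZMod.natCast_zmod_val x]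
    have hsplit : ∑ j ∈ Finset.range p, (((j : F)) ^ 2)⁻¹
        = (((0 : ℕ) : F) ^ 2)⁻¹ + ∑ j ∈ Finset.Icc 1 (2 * h), (((j : F)) ^ 2)⁻¹ := by
      have h0 : (0 : ℕ) ∈ Finset.range p := by simp; omega
      rw [← Finset.add_sum_erase _ _ h0]
      congr 1
      apply Finset.sum_congr _ (fun _ _ => rfl)
      ext x
      simp [Finset.mem_erase, Finset.mem_range, Finset.mem_Icc]
      omega
    have : (((0 : ℕ) : F) ^ 2)⁻¹ = 0 := by simp
    rw [hrange, hsplit, this, zero_add] at huniv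
    exact huniv
  -- the full sum is twice the half sum
  have hhalf : ∑ j ∈ Finset.Icc 1 (2 * h), (((j : F)) ^ 2)⁻¹
      = 2 * ∑ j ∈ Finset.Icc 1 h, (((j : F)) ^ 2)⁻¹ := by
    have hIcc : ∀ n : ℕ, Finset.Icc 1 n = Finset.Ioc 0 n := fun n => rfl
    rw [hIcc, hIcc, ← Finset.sum_Ioc_consecutive _ (Nat.zero_le h) (by omega : h ≤ 2 * h)]
    have hsecond : ∑ j ∈ Finset.Ioc h (2 * h), (((j : F)) ^ 2)⁻¹
        = ∑ j ∈ Finset.Ioc 0 h, (((j : F)) ^ 2)⁻¹ := by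
      refine Finset.sum_nbij' (fun j => 2 * h + 1 - j) (fun j => 2 * h + 1 - j) ?_ ?_ ?_ ?_ ?_ <;>
          intro a ha <;> simp only [Finset.mem_Ioc] at ha ⊢
      · omega
      · omega
      · omega
      · omega
      · have hcast : ((2 * h + 1 : ℕ) : F) = 0 := by
          rw [← hph]; exact ZMod.natCast_self p
        have h1 : ((2 * h + 1 - a : ℕ) : F) = -(a : F) := by
          rw [Nat.cast_sub (by omega : a ≤ 2 * h + 1), hcast, zero_sub]
        rw [h1, neg_pow, pow_two]
        ring_nf
        norm_num
    rw [hsecond, two_mul]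
  have h2ne : (2 : F) ≠ 0 := by
    have : ((2 : ℕ) : F) ≠ 0 := by
      rw [Ne, ZMod.natCast_eq_zero_iff]
      intro hd
      have := Nat.le_of_dvd (by norm_num) hd
      omega
    simpa using this
  rw [hhalf] at hfull
  rcases mul_eq_zero.mp hfull with h' | h'
  · exact absurd h' h2ne
  · exact h'

lemma glaisher_dvd_sum (p h : ℕ) (hp : p.Prime) (hph : p = 2 * h + 1) (hp5 : 5 ≤ p) :
    p ∣ ∑ j ∈ Finset.Icc 1 h, ∏ i ∈ (Finset.Icc 1 h).erase j, (i * (p - i)) := by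
  haveI : Fact p.Prime := ⟨hp⟩
  rw [← ZMod.natCast_eq_zero_iff]
  push_cast
  set F := ZMod p
  set g : ℕ → F := fun i => (i : F) * ((p - i : ℕ) : F) with hg
  have hgval : ∀ i ∈ Finset.Icc 1 h, g i = -((i : F) ^ 2) := by
    intro i hi
    simp only [Finset.mem_Icc] at hi
    rw [hg]
    simp only
    rw [Nat.cast_sub (by omega), ZMod.natCast_self, zero_sub]
    ring
  have hine : ∀ i ∈ Finset.Icc 1 h, (i : F) ≠ 0 := by
    intro i hi
    simp only [Finset.mem_Icc] at hi
    rw [Ne, ZMod.natCast_eq_zero_iff]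
    intro hd
    have := Nat.le_of_dvd (by omega) hd
    omega
  have hgne : ∀ i ∈ Finset.Icc 1 h, g i ≠ 0 := by
    intro i hi
    rw [hgval i hi]
    simp [hine i hi]
  have hprod : ∀ j ∈ Finset.Icc 1 h, (∏ i ∈ (Finset.Icc 1 h).erase j, g i)
      = (∏ i ∈ Finset.Icc 1 h, g i) * (g j)⁻¹ := by
    intro j hj
    rw [eq_mul_inv_iff_mul_eq₀ (hgne j hj)]
    exact Finset.prod_erase_mul _ _ hj
  calc ∑ j ∈ Finset.Icc 1 h, ∏ i ∈ (Finset.Icc 1 h).erase j, g i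
      = ∑ j ∈ Finset.Icc 1 h, (∏ i ∈ Finset.Icc 1 h, g i) * (g j)⁻¹ :=
        Finset.sum_congr rfl hprod
    _ = (∏ i ∈ Finset.Icc 1 h, g i) * ∑ j ∈ Finset.Icc 1 h, (g j)⁻¹ := by
        rw [Finset.mul_sum]
    _ = 0 := by
        have h1 : ∑ j ∈ Finset.Icc 1 h, (g j)⁻¹
            = ∑ j ∈ Finset.Icc 1 h, -((((j : F)) ^ 2)⁻¹) := by
          refine Finset.sum_congr rfl fun j hj => ?_
          rw [hgval j hj, inv_neg]
        rw [h1, Finset.sum_neg_distrib, glaisher_sum_inv_sq p h hp hph hp5, neg_zero, mul_zero]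

theorem glaisher_product_congruence (p m : ℕ) (hp : p.Prime) (hp5 : 5 ≤ p) (hm : 1 ≤ m) :
    (∏ j ∈ Finset.Icc 1 (p - 1), (m * p + j)) ≡ Nat.factorial (p - 1) [MOD p ^ 3] := by
  obtain ⟨h, hph⟩ : ∃ h, p = 2 * h + 1 := by
    rcases hp.eq_two_or_odd' with h2 | ⟨h, hh⟩
    · omega
    · exact ⟨h, hh⟩
  have hh2 : 2 ≤ h := by omega
  have hp1 : p - 1 = 2 * h := by omega
  -- pair up the product in ℕ
  have hpair : (∏ j ∈ Finset.Icc 1 (p - 1), (m * p + j))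
      = ∏ j ∈ Finset.Icc 1 h, (j * (p - j) + m * (m + 1) * p ^ 2) := by
    rw [hp1, glaisher_prod_pair h (fun j => m * p + j)]
    refine Finset.prod_congr rfl fun j hj => ?_
    simp only [Finset.mem_Icc] at hj
    have h1 : j ≤ p := by omega
    have h2 : j ≤ 2 * h + 1 := by omega
    zify [h1, h2, hph]
    ring
  have hfact : Nat.factorial (p - 1) = ∏ j ∈ Finset.Icc 1 h, (j * (p - j)) := by
    rw [← Finset.prod_Ico_id_eq_factorial (p - 1), Finset.Ico_add_one_right_eq_Icc, hp1,
      glaisher_prod_pair h (fun j => j)]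
    refine Finset.prod_congr rfl fun j hj => ?_
    simp only [Finset.mem_Icc] at hj
    congr 1
    omega
  rw [hpair, hfact, ← ZMod.natCast_eq_natCast_iff]
  push_cast
  set R := ZMod (p ^ 3)
  have hp3 : ((p : R)) ^ 3 = 0 := by
    have := ZMod.natCast_self (p ^ 3)
    push_cast at this
    exact this
  have hC : ((m : R) * ((m : R) + 1) * (p : R) ^ 2) * ((m : R) * ((m : R) + 1) * (p : R) ^ 2) = 0 := by
    have : ((m : R) * ((m : R) + 1) * (p : R) ^ 2) * ((m : R) * ((m : R) + 1) * (p : R) ^ 2)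
        = ((m : R) * ((m : R) + 1)) ^ 2 * (p : R) * ((p : R) ^ 3) := by ring
    rw [this, hp3, mul_zero]
  rw [glaisher_prod_add (Finset.Icc 1 h) (fun j => (j : R) * (((p - j : ℕ)) : R))
      ((m : R) * ((m : R) + 1) * (p : R) ^ 2) hC]
  -- it remains to kill the error term
  have hS : (p : ℕ) ∣ ∑ j ∈ Finset.Icc 1 h, ∏ i ∈ (Finset.Icc 1 h).erase j, (i * (p - i)) :=
    glaisher_dvd_sum p h hp hph hp5
  obtain ⟨t, ht⟩ := hS
  have hsum_cast : (∑ j ∈ Finset.Icc 1 h, ∏ i ∈ (Finset.Icc 1 h).erase j,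
      ((i : R) * (((p - i : ℕ)) : R))) = ((p * t : ℕ) : R) := by
    rw [← ht]
    rw [Nat.cast_sum]; refine Finset.sum_congr rfl fun j _ => ?_
    rw [Nat.cast_prod]; refine Finset.prod_congr rfl fun i _ => ?_
    rw [Nat.cast_mul]
  rw [hsum_cast]
  have : ((m : R) * ((m : R) + 1) * (p : R) ^ 2) * ((p * t : ℕ) : R)
      = (m : R) * ((m : R) + 1) * (t : R) * ((p : R) ^ 3) := by rw [Nat.cast_mul]; ring
  rw [this, hp3, mul_zero, add_zero]
end

section
/- Let p be an odd prime and s ≥ 1, i ≥ 0 integers. Then in the polynomial ring ℤ[q], the polynomial [p]_q^s divides q^{pi} − ∑_{k=0}^{s-1} C(i,k) (−1)^k [p]_q^k (1−q)^k. -/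
open Polynomial Finset

/-- The q-integer [n]_q = 1 + q + ... + q^(n-1) in ℤ[q]. -/
noncomputable def qInt (n : ℕ) : Polynomial ℤ := ∑ i ∈ Finset.range n, X ^ i

theorem qpow_expansion (p s i : ℕ) (hp : p.Prime) (hodd : Odd p) (hs : 1 ≤ s) :
    qInt p ^ s ∣
      X ^ (p * i) -
        ∑ k ∈ Finset.range s,
          (Nat.choose i k : Polynomial ℤ) * (-1) ^ k * qInt p ^ k * (1 - X) ^ k := by
  set t : Polynomial ℤ := (-1) * qInt p * (1 - X) with ht
  have hq : qInt p * (X - 1) = X ^ p - 1 := geom_sum_mul X p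
  have hXp : (X : Polynomial ℤ) ^ p = 1 + t := by rw [ht]; linear_combination -hq
  have hdvd_t : qInt p ∣ t := ⟨(-1) * (1 - X), by ring⟩
  set N := max (i + 1) s with hN
  have hbin : (X : Polynomial ℤ) ^ (p * i) =
      ∑ k ∈ Finset.range N, (Nat.choose i k : Polynomial ℤ) * t ^ k := by
    rw [pow_mul, hXp, add_comm, add_pow]
    rw [Finset.sum_subset (Finset.range_subset_range.mpr (le_max_left (i + 1) s))
      (fun k _ hk' => by
        have : i < k := by simpa using hk'
        simp [Nat.choose_eq_zero_of_lt this])]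
    exact Finset.sum_congr rfl fun k _ => by ring
  have hsum : ∑ k ∈ Finset.range s,
      (Nat.choose i k : Polynomial ℤ) * (-1) ^ k * qInt p ^ k * (1 - X) ^ k =
      ∑ k ∈ Finset.range s, (Nat.choose i k : Polynomial ℤ) * t ^ k := by
    refine Finset.sum_congr rfl fun k _ => ?_
    rw [ht]; rw [mul_pow, mul_pow]; ring
  rw [hbin, hsum, ← Finset.sum_sdiff_eq_sub (Finset.range_subset_range.mpr (le_max_right _ _))]
  refine Finset.dvd_sum fun k hk => ?_
  have hsk : s ≤ k := by
    rcases Finset.mem_sdiff.mp hk with ⟨_, h2⟩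
    simpa using h2
  exact Dvd.dvd.mul_left ((pow_dvd_pow_of_dvd hdvd_t s).trans (pow_dvd_pow t hsk)) _
end

section
/- Let p be an odd prime and i ≥ 0 an integer. Then in ℤ[q], [p]_q^3 divides q^{pi} − (1 − i(1−q)[p]_q + (i(i−1)/2)(1−q)^2 [p]_q^2). -/
open Polynomial Finset

lemma tri_succ (i : ℕ) : (i + 1) * i / 2 = i * (i - 1) / 2 + i := by
  have h1 := Nat.choose_two_right (i + 1)
  have h2 := Nat.choose_two_right i
  have h3 : (i + 1).choose 2 = i.choose 1 + i.choose 2 := Nat.choose_succ_succ i 1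
  simp [Nat.choose_one_right, Nat.add_sub_cancel] at h1 h3
  omega

lemma xp_eq (p : ℕ) : (X : Polynomial ℤ) ^ p = 1 - (1 - X) * qInt p := by
  have h := geom_sum_mul (X : Polynomial ℤ) p
  unfold qInt
  linear_combination -h

theorem qpow_expansion_three (p i : ℕ) (hp : p.Prime) (hodd : Odd p) :
    qInt p ^ 3 ∣
      X ^ (p * i) -
        (1 - (i : Polynomial ℤ) * (1 - X) * qInt p +
          (↑(i * (i - 1) / 2) : Polynomial ℤ) * (1 - X) ^ 2 * qInt p ^ 2) := by
  rw [pow_mul, xp_eq]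
  induction i with
  | zero => simp
  | succ i ih =>
    obtain ⟨c, hc⟩ := ih
    refine ⟨(1 - (1 - X) * qInt p) * c - (↑(i * (i - 1) / 2) : Polynomial ℤ) * (1 - X) ^ 3, ?_⟩
    have key : ((1 - (1 - X) * qInt p)) ^ (i + 1)
        = (1 - (1 - X) * qInt p) * ((1 - (1 - X) * qInt p) ^ i) := by ring
    have hcast : ((↑((i + 1) * i / 2) : Polynomial ℤ))
        = (↑(i * (i - 1) / 2) : Polynomial ℤ) + (i : Polynomial ℤ) := by
      rw [tri_succ]; push_cast; ring
    push_cast [Nat.add_sub_cancel]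
    rw [key, hcast]
    linear_combination (1 - (1 - X) * qInt p) * hc
end

section
/- Let p be an odd prime and m ≥ 1 an integer. Then in ℤ[q], [p]_q^2 divides the Gaussian binomial coefficient C((m+1)p − 1, p − 1)_q minus q^{mp(p-1)/2}. -/
open Polynomial Finset

/-- The Gaussian (q-)binomial coefficient in ℤ[q], via the q-Pascal recurrence. -/
noncomputable def qBinom : ℕ → ℕ → Polynomial ℤ
  | _, 0 => 1
  | 0, _ + 1 => 0
  | n + 1, k + 1 => qBinom n k + X ^ (k + 1) * qBinom n (k + 1)

lemma qInt_add (a b : ℕ) : qInt (a + b) = qInt a + X ^ a * qInt b := by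
  simp only [qInt, Finset.sum_range_add, Finset.mul_sum, pow_add]

lemma qInt_mul_X_sub_one (n : ℕ) : qInt n * (X - 1) = X ^ n - 1 := by
  simpa [qInt] using geom_sum_mul (X : Polynomial ℤ) n

lemma qInt_mul (a b : ℕ) : qInt (a * b) = qInt a * ∑ j ∈ Finset.range b, X ^ (a * j) := by
  induction b with
  | zero => simp [qInt]
  | succ b ih =>
      rw [Nat.mul_succ, qInt_add, ih, Finset.sum_range_succ]
      ring

lemma qBinom_eq_zero : ∀ n k : ℕ, n < k → qBinom n k = 0
  | _, 0, h => absurd h (Nat.not_lt_zero _)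
  | 0, _ + 1, _ => rfl
  | n + 1, k + 1, h => by
      rw [qBinom, qBinom_eq_zero n k (by omega), qBinom_eq_zero n (k+1) (by omega)]
      ring

lemma key_prod : ∀ k n : ℕ, qBinom (n + k) k * ∏ i ∈ Finset.range k, qInt (i + 1)
    = ∏ i ∈ Finset.range k, qInt (n + 1 + i)
  | 0, n => by simp [qBinom]
  | k + 1, 0 => by
      have h0 : qBinom k (k + 1) = 0 := qBinom_eq_zero _ _ (by omega)
      have hd : qBinom (0 + (k + 1)) (k + 1) = qBinom k k + X ^ (k+1) * qBinom k (k+1) := by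
        rw [Nat.zero_add, qBinom]
      have h1 : ∀ j : ℕ, qBinom j j = 1 := by
        intro j
        induction j with
        | zero => rfl
        | succ j ihj => rw [qBinom, ihj, qBinom_eq_zero j (j+1) (by omega)]; ring
      rw [hd, h0, h1, mul_zero, add_zero, one_mul]
      exact Finset.prod_congr rfl fun i _ => by rw [Nat.zero_add, Nat.add_comm]
  | k + 1, n + 1 => by
      have ih1 := key_prod k (n + 1)
      have ih2 := key_prod (k + 1) n
      have e2 : n + (k + 1) = n + 1 + k := by omega
      rw [e2, Finset.prod_range_succ] at ih2
      have hrec : qBinom (n + 1 + (k + 1)) (k + 1)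
          = qBinom (n + 1 + k) k + X ^ (k + 1) * qBinom (n + 1 + k) (k + 1) := by
        have e1 : n + 1 + (k + 1) = (n + 1 + k) + 1 := by omega
        rw [e1, qBinom]
      have hsplit : ∏ i ∈ Finset.range (k + 1), qInt (n + 1 + i)
          = qInt (n + 1) * ∏ i ∈ Finset.range k, qInt (n + 1 + 1 + i) := by
        rw [Finset.prod_range_succ', mul_comm]
        congr 1
        refine Finset.prod_congr rfl fun i _ => ?_
        congr 1; omega
      rw [hsplit] at ih2
      have hq : qInt (n + 1 + 1 + k) = qInt (k + 1) + X ^ (k + 1) * qInt (n + 1) := by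
        rw [← qInt_add]; congr 1; omega
      rw [hrec, Finset.prod_range_succ, Finset.prod_range_succ, hq]
      linear_combination qInt (k + 1) * ih1 + X ^ (k + 1) * ih2

lemma prod_expand_sq {ι : Type*} [DecidableEq ι] (Φ : Polynomial ℤ) (s : Finset ι)
    (a b : ι → Polynomial ℤ) :
    Φ ^ 2 ∣ (∏ i ∈ s, (a i + Φ * b i)) -
      ((∏ i ∈ s, a i) + Φ * ∑ i ∈ s, b i * ∏ j ∈ s.erase i, a j) := by
  induction s using Finset.induction_on with
  | empty => simp
  | @insert x s hx ih =>
      obtain ⟨w, hw⟩ := ih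
      refine ⟨b x * (∑ i ∈ s, b i * ∏ j ∈ s.erase i, a j) + a x * w + Φ * (b x * w), ?_⟩
      rw [Finset.prod_insert hx, Finset.prod_insert hx, Finset.sum_insert hx,
        Finset.erase_insert hx]
      have hsum : ∑ i ∈ s, b i * ∏ j ∈ (insert x s).erase i, a j
          = a x * ∑ i ∈ s, b i * ∏ j ∈ s.erase i, a j := by
        rw [Finset.mul_sum]
        refine Finset.sum_congr rfl fun i hi => ?_
        rw [Finset.erase_insert_of_ne (by rintro rfl; exact hx hi),
          Finset.prod_insert (fun h => hx (Finset.mem_of_mem_erase h))]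
        ring
      rw [hsum]
      linear_combination (a x + Φ * b x) * hw

lemma one_add_pow_sq (y : Polynomial ℤ) (t : ℕ) :
    y ^ 2 ∣ (1 + y) ^ t - (1 + (t : Polynomial ℤ) * y) := by
  induction t with
  | zero => simp
  | succ t ih =>
      obtain ⟨w, hw⟩ := ih
      refine ⟨(t : Polynomial ℤ) + w + y * w, ?_⟩
      push_cast
      linear_combination (1 + y) * hw

section eval
variable {p : ℕ} {ζ : ℂ}

lemma qInt_eq_cyclotomic (hp : p.Prime) : qInt p = cyclotomic p ℤ := by
  haveI : Fact p.Prime := ⟨hp⟩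
  rw [cyclotomic_prime, qInt]

lemma qInt_dvd_of_aeval (hp : p.Prime) (hζ : IsPrimitiveRoot ζ p) {A : Polynomial ℤ}
    (h : aeval ζ A = 0) : qInt p ∣ A := by
  rw [qInt_eq_cyclotomic hp, cyclotomic_eq_minpoly hζ hp.pos]
  exact minpoly.isIntegrallyClosed_dvd (hζ.isIntegral hp.pos) h

lemma aeval_of_qInt_dvd (hp : p.Prime) (hζ : IsPrimitiveRoot ζ p) {A : Polynomial ℤ}
    (h : qInt p ∣ A) : aeval ζ A = 0 := by
  obtain ⟨c, rfl⟩ := h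
  have h0 : aeval ζ (qInt p) = 0 := by
    rw [qInt_eq_cyclotomic hp, cyclotomic_eq_minpoly hζ hp.pos]
    exact minpoly.aeval ℤ ζ
  rw [map_mul, h0, zero_mul]

lemma aeval_qInt_mul (n : ℕ) : aeval ζ (qInt n) * (ζ - 1) = ζ ^ n - 1 := by
  have := congrArg (aeval ζ) (qInt_mul_X_sub_one n)
  simpa using this

lemma aeval_qInt_ne_zero (hζ : IsPrimitiveRoot ζ p) {j : ℕ}
    (h1 : 0 < j) (h2 : j < p) : aeval ζ (qInt j) ≠ 0 := by
  intro h
  have := aeval_qInt_mul (ζ := ζ) j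
  rw [h, zero_mul] at this
  exact hζ.pow_ne_one_of_pos_of_lt h1.ne' h2 (by linear_combination -this)

lemma complex_key {u : ℕ} (hp : p.Prime) (hu : p - 1 = 2 * u)
    (hζ : IsPrimitiveRoot ζ p) :
    aeval ζ ((∑ i ∈ Finset.range (p - 1), X ^ (i + 1) *
        ∏ j ∈ (Finset.range (p - 1)).erase i, qInt (j + 1))
      - (u : Polynomial ℤ) * (X - 1) * ∏ i ∈ Finset.range (p - 1), qInt (i + 1)) = 0 := by
  have hp2 : 2 ≤ p := hp.two_le
  set k := p - 1 with hk
  have hkp : k + 1 = p := by omega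
  set g : ℕ → ℂ := fun n => aeval ζ (qInt n) with hgdef
  have hg : ∀ n, g n * (ζ - 1) = ζ ^ n - 1 := fun n => aeval_qInt_mul n
  have hgne : ∀ i, i < k → g (i + 1) ≠ 0 := fun i hi =>
    aeval_qInt_ne_zero hζ (Nat.succ_pos i) (by omega)
  have hxne : ∀ i, i < k → ζ ^ (i + 1) - 1 ≠ 0 := fun i hi =>
    sub_ne_zero.mpr (hζ.pow_ne_one_of_pos_of_lt (Nat.succ_ne_zero i) (by omega))
  set Gc : ℂ := ∏ i ∈ Finset.range k, g (i + 1) with hGc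
  set F : ℕ → ℂ := fun j => ζ ^ j / (ζ ^ j - 1) with hF
  simp only [map_sub, map_sum, map_mul, map_prod, map_pow, aeval_X, map_natCast, map_one]
  have hterm : ∀ i ∈ Finset.range k, ζ ^ (i + 1) *
      ∏ j ∈ (Finset.range k).erase i, aeval ζ (qInt (j + 1))
      = ((ζ - 1) * F (i + 1)) * Gc := by
    intro i hi
    rw [Finset.mem_range] at hi
    have h1 : (∏ j ∈ (Finset.range k).erase i, g (j + 1)) * g (i + 1) = Gc :=
      Finset.prod_erase_mul _ _ (Finset.mem_range.mpr hi)
    have h2 := hgne i hi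
    have h3 := hg (i + 1)
    have h4 := hxne i hi
    have h5 : (∏ j ∈ (Finset.range k).erase i, g (j + 1)) = Gc / g (i + 1) :=
      eq_div_of_mul_eq h2 h1
    show ζ ^ (i + 1) * ∏ j ∈ (Finset.range k).erase i, g (j + 1) = _
    have h6 : Gc / g (i + 1) = (ζ - 1) * Gc / (ζ ^ (i + 1) - 1) := by
      rw [div_eq_div_iff h2 h4]
      linear_combination (-Gc) * h3
    rw [h5, h6, hF]
    field_simp
  have hGc' : ∏ x ∈ Finset.range k, aeval ζ (qInt (x + 1)) = Gc := rfl
  rw [Finset.sum_congr rfl hterm, hGc']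
  have hsum : ∑ i ∈ Finset.range k, F (i + 1) = u := by
    have hrefl : ∑ i ∈ Finset.range k, F (k - i) = ∑ i ∈ Finset.range k, F (i + 1) := by
      have := Finset.sum_range_reflect (fun i => F (i + 1)) k
      rw [← this]
      refine Finset.sum_congr rfl fun i hi => ?_
      rw [Finset.mem_range] at hi
      congr 1
      omega
    have hpair : ∀ i ∈ Finset.range k, F (i + 1) + F (k - i) = 1 := by
      intro i hi
      rw [Finset.mem_range] at hi
      have hab : ζ ^ (i + 1) * ζ ^ (k - i) = 1 := by
        rw [← pow_add]
        have : i + 1 + (k - i) = p := by omega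
        rw [this, hζ.pow_eq_one]
      have h4 := hxne i hi
      have h4' : ζ ^ (k - i) - 1 ≠ 0 := by
        have hki : k - i = (k - i - 1) + 1 := by omega
        rw [hki]; exact hxne _ (by omega)
      rw [hF]
      field_simp
      linear_combination hab
    have h2 : (2 : ℂ) * ∑ i ∈ Finset.range k, F (i + 1) = 2 * u := by
      calc (2 : ℂ) * ∑ i ∈ Finset.range k, F (i + 1)
          = ∑ i ∈ Finset.range k, (F (i + 1) + F (k - i)) := by
            rw [Finset.sum_add_distrib, hrefl]; ring
        _ = k := by rw [Finset.sum_congr rfl hpair]; simp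
        _ = 2 * u := by rw [hu]; push_cast; ring
    exact mul_left_cancel₀ (two_ne_zero (α := ℂ)) h2
  calc (∑ i ∈ Finset.range k, ((ζ - 1) * F (i + 1)) * Gc)
      - (u : ℂ) * (ζ - 1) * Gc
      = ((ζ - 1) * ∑ i ∈ Finset.range k, F (i + 1)) * Gc - (u : ℂ) * (ζ - 1) * Gc := by
        rw [Finset.mul_sum, Finset.sum_mul]
    _ = 0 := by rw [hsum]; ring

end eval

theorem andrews_congruence (p m : ℕ) (hp : p.Prime) (hodd : Odd p) (hm : 1 ≤ m) :
    qInt p ^ 2 ∣ qBinom ((m + 1) * p - 1) (p - 1) - X ^ (m * p * (p - 1) / 2) := by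
  classical
  have hp2 : 2 ≤ p := hp.two_le
  obtain ⟨u, hu⟩ : ∃ u, p - 1 = 2 * u := by
    rcases hodd with ⟨t, ht⟩; exact ⟨t, by omega⟩
  have hpne : p ≠ 0 := by omega
  have hζ := Complex.isPrimitiveRoot_exp p hpne
  have hprime : Prime (qInt p) := by
    rw [qInt_eq_cyclotomic hp]
    exact UniqueFactorizationMonoid.irreducible_iff_prime.mp (cyclotomic.irreducible hp.pos)
  -- notation
  have hGndvd : ¬ qInt p ∣ ∏ i ∈ Finset.range (p - 1), qInt (i + 1) := by
    intro h
    have h0 := aeval_of_qInt_dvd hp hζ h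
    rw [map_prod] at h0
    obtain ⟨i, hi, h0⟩ := Finset.prod_eq_zero_iff.mp h0
    rw [Finset.mem_range] at hi
    exact aeval_qInt_ne_zero hζ (Nat.succ_pos i) (by omega) h0
  have hmp : (m + 1) * p = m * p + p := by ring
  have hkey : qBinom ((m + 1) * p - 1) (p - 1) * ∏ i ∈ Finset.range (p - 1), qInt (i + 1)
      = ∏ i ∈ Finset.range (p - 1), qInt (m * p + 1 + i) := by
    have h := key_prod (p - 1) (m * p)
    have e : m * p + (p - 1) = (m + 1) * p - 1 := by omega
    rw [e] at h
    exact h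
  set Φ := qInt p with hΦ
  set G := ∏ i ∈ Finset.range (p - 1), qInt (i + 1) with hG
  set S := ∑ i ∈ Finset.range (p - 1), X ^ (i + 1) *
      ∏ j ∈ (Finset.range (p - 1)).erase i, qInt (j + 1) with hS
  set c : Polynomial ℤ := ∑ j ∈ Finset.range m, X ^ (p * j) with hc
  -- Step A
  have hA : Φ ^ 2 ∣ (∏ i ∈ Finset.range (p - 1), qInt (m * p + 1 + i)) - (G + Φ * (c * S)) := by
    have hmpc : qInt (m * p) = Φ * c := by
      rw [show m * p = p * m from mul_comm m p, qInt_mul]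
    have hfac : ∀ i ∈ Finset.range (p - 1),
        qInt (m * p + 1 + i) = qInt (i + 1) + Φ * (X ^ (i + 1) * c) := by
      intro i _
      have e : m * p + 1 + i = (i + 1) + m * p := by omega
      rw [e, qInt_add, hmpc]; ring
    have hps := prod_expand_sq Φ (Finset.range (p - 1))
      (fun i => qInt (i + 1)) (fun i => X ^ (i + 1) * c)
    rw [Finset.prod_congr rfl hfac]
    have hsum : ∑ i ∈ Finset.range (p - 1),
        (X ^ (i + 1) * c) * ∏ j ∈ (Finset.range (p - 1)).erase i, qInt (j + 1) = c * S := by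
      rw [hS, Finset.mul_sum]
      exact Finset.sum_congr rfl fun i _ => by ring
    rw [← hsum]
    exact hps
  -- Step B
  have hXp : (X : Polynomial ℤ) ^ p = 1 + Φ * (X - 1) := by
    have := qInt_mul_X_sub_one p
    rw [← hΦ] at this
    linear_combination -this
  have he : m * p * (p - 1) / 2 = p * (m * u) := by
    rw [hu]
    have e : m * p * (2 * u) = p * (m * u) * 2 := by ring
    rw [e, Nat.mul_div_cancel _ (by norm_num)]
  have hB : Φ ^ 2 ∣ X ^ (m * p * (p - 1) / 2) - (1 + ((m * u : ℕ) : Polynomial ℤ) * (Φ * (X - 1))) := by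
    have h1 := one_add_pow_sq (Φ * (X - 1)) (m * u)
    have h2 : Φ ^ 2 ∣ (Φ * (X - 1)) ^ 2 := ⟨(X - 1) ^ 2, by ring⟩
    have h3 := dvd_trans h2 h1
    rw [he, pow_mul, hXp]
    exact h3
  -- Step C
  have hC : Φ ∣ c * S - ((m * u : ℕ) : Polynomial ℤ) * ((X - 1) * G) := by
    have hc1 : Φ ∣ c - (m : Polynomial ℤ) := by
      have e : c - (m : Polynomial ℤ) = ∑ j ∈ Finset.range m, ((X : Polynomial ℤ) ^ (p * j) - 1) := by
        rw [Finset.sum_sub_distrib, hc]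
        simp [mul_comm]
      rw [e]
      refine Finset.dvd_sum fun j _ => ?_
      have h1 : Φ ∣ (X : Polynomial ℤ) ^ p - 1 := ⟨X - 1, by rw [hΦ, ← qInt_mul_X_sub_one p]⟩
      have h2 : (X : Polynomial ℤ) ^ p - 1 ∣ ((X : Polynomial ℤ) ^ p) ^ j - 1 := by
        simpa using sub_dvd_pow_sub_pow ((X : Polynomial ℤ) ^ p) 1 j
      rw [← pow_mul] at h2
      exact dvd_trans h1 h2
    have hc2 : Φ ∣ S - (u : Polynomial ℤ) * (X - 1) * G :=
      qInt_dvd_of_aeval hp hζ (complex_key hp hu hζ)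
    obtain ⟨w1, hw1⟩ := hc1
    obtain ⟨w2, hw2⟩ := hc2
    refine ⟨w1 * S + (m : Polynomial ℤ) * w2, ?_⟩
    push_cast
    linear_combination S * hw1 + (m : Polynomial ℤ) * hw2
  -- combine
  have hmain : Φ ^ 2 ∣ (∏ i ∈ Finset.range (p - 1), qInt (m * p + 1 + i))
      - X ^ (m * p * (p - 1) / 2) * G := by
    obtain ⟨wA, hwA⟩ := hA
    obtain ⟨wB, hwB⟩ := hB
    obtain ⟨wC, hwC⟩ := hC
    refine ⟨wA - wB * G + wC, ?_⟩
    linear_combination hwA - G * hwB + Φ * hwC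
  have hmul : Φ ^ 2 ∣ (qBinom ((m + 1) * p - 1) (p - 1) - X ^ (m * p * (p - 1) / 2)) * G := by
    rw [sub_mul, hkey]
    exact hmain
  exact hprime.pow_dvd_of_dvd_mul_right 2 hGndvd hmul
end

section
/- Let p be an odd prime and m ≥ 1 an integer. Then in ℤ[q], [p]_q^2 divides 1 − q^{(m+1)p} − (m+1)(1−q)[p]_q. -/
open Polynomial Finset

theorem qpow_expansion_two (p m : ℕ) (hp : p.Prime) (hodd : Odd p) (hm : 1 ≤ m) :
    qInt p ^ 2 ∣ 1 - X ^ ((m + 1) * p) - (↑(m + 1) : Polynomial ℤ) * (1 - X) * qInt p := by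
  have h1 : (1 - X : Polynomial ℤ) * qInt p = 1 - X ^ p := by
    have := geom_sum_mul (X : Polynomial ℤ) p
    unfold qInt
    linear_combination -this
  have hdvd1 : qInt p ∣ 1 - X ^ p := ⟨1 - X, by linear_combination -h1⟩
  have h2 : (∑ i ∈ Finset.range (m + 1), (X ^ p : Polynomial ℤ) ^ i) * (X ^ p - 1)
      = (X ^ p) ^ (m + 1) - 1 := geom_sum_mul _ _
  have hdvd2 : qInt p ∣ (∑ i ∈ Finset.range (m + 1), (X ^ p : Polynomial ℤ) ^ i)
      - (↑(m + 1) : Polynomial ℤ) := by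
    have : (∑ i ∈ Finset.range (m + 1), (X ^ p : Polynomial ℤ) ^ i)
        - (↑(m + 1) : Polynomial ℤ)
        = ∑ i ∈ Finset.range (m + 1), ((X ^ p : Polynomial ℤ) ^ i - 1) := by
      rw [Finset.sum_sub_distrib]
      simp
    rw [this]
    refine Finset.dvd_sum fun i _ => ?_
    have : (X ^ p - 1 : Polynomial ℤ) ∣ (X ^ p) ^ i - 1 ^ i := sub_dvd_pow_sub_pow _ _ i
    rw [one_pow] at this
    exact dvd_trans (by simpa using (dvd_neg.mpr hdvd1)) this
  have key : 1 - X ^ ((m + 1) * p) - (↑(m + 1) : Polynomial ℤ) * (1 - X) * qInt p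
      = (1 - X ^ p) * ((∑ i ∈ Finset.range (m + 1), (X ^ p : Polynomial ℤ) ^ i)
          - (↑(m + 1) : Polynomial ℤ)) := by
    have hx : (X : Polynomial ℤ) ^ ((m + 1) * p) = (X ^ p) ^ (m + 1) := by
      rw [← pow_mul, mul_comm]
    rw [hx, mul_assoc, h1]
    linear_combination h2
  rw [key, sq]
  exact mul_dvd_mul hdvd1 hdvd2
end
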